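/- For n ≥ 3 and α = (a,b) ∈ V_{2^n−2,2}, with α̂ = (b,a): α ∈ W_{2^{n−1}−1,2} if and only if α̂ ∈ 𝕆_α^⊥, the orthogonal complement of 𝕆_α in A_{n+1}. -/

import Mathlib

noncomputable section

/-- The Cayley–Dickson algebra `A n` of dimension `2^n` over `ℝ`:
`A 0 = ℝ` and `A (n+1) = A n × A n`. -/
def CD : ℕ → Type
  | 0 => ℝ
  | n + 1 => CD n × CD n

namespace CD

instance instAddCommGroup : (n : ℕ) → AddCommGroup (CD n)
  | 0 => inferInstanceAs (AddCommGroup ℝ)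
  | n + 1 =>
    letI := instAddCommGroup n
    inferInstanceAs (AddCommGroup (CD n × CD n))

instance instModule : (n : ℕ) → Module ℝ (CD n)
  | 0 => inferInstanceAs (Module ℝ ℝ)
  | n + 1 =>
    letI := instAddCommGroup n
    letI := instModule n
    inferInstanceAs (Module ℝ (CD n × CD n))

/-- Conjugation: `x̄ = x` on `ℝ` and `(x₁,x₂)‾ = (x̄₁, -x₂)`. -/
protected def conj : {n : ℕ} → CD n → CD n
  | 0, x => x
  | _ + 1, x => (CD.conj x.1, -x.2)

/-- Cayley–Dickson multiplication: `(a,b)(x,y) = (ax - ȳb, ya + bx̄)`. -/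
protected def mul : {n : ℕ} → CD n → CD n → CD n
  | 0, x, y => (show ℝ from x) * (show ℝ from y)
  | _ + 1, x, y =>
    (CD.mul x.1 y.1 - CD.mul (CD.conj y.2) x.2,
     CD.mul y.2 x.1 + CD.mul x.2 (CD.conj y.1))

instance instMul (n : ℕ) : Mul (CD n) := ⟨CD.mul⟩

/-- The multiplicative unit `e₀` of `A n`. -/
def e0 : (n : ℕ) → CD n
  | 0 => (1 : ℝ)
  | n + 1 => (e0 n, 0)

/-- The element `ẽ₀ = (0, e₀)` of `A n` (junk value `0` for `n = 0`). -/
def te0 : (n : ℕ) → CD n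
  | 0 => 0
  | n + 1 => (0, e0 n)

/-- The "complexification" `α̃ = (-b, a)` of `α = (a,b)` (junk value `0` for `n = 0`);
note `α̃ = α·ẽ₀`. -/
def tilde : {n : ℕ} → CD n → CD n
  | 0, _ => 0
  | _ + 1, x => (-x.2, x.1)

/-- The standard inner product on `A n ≅ ℝ^{2^n}`. -/
protected def inner : {n : ℕ} → CD n → CD n → ℝ
  | 0, x, y => (show ℝ from x) * (show ℝ from y)
  | _ + 1, x, y => CD.inner x.1 y.1 + CD.inner x.2 y.2

/-- The euclidean norm on `A n`. -/
protected def norm {n : ℕ} (x : CD n) : ℝ := Real.sqrt (CD.inner x x)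

/-- `x` is pure if its trace `t(x) = x + x̄` vanishes. -/
def IsPure {n : ℕ} (x : CD n) : Prop := x + CD.conj x = 0

/-- `x = (a,b)` is doubly pure if both `a` and `b` are pure
(equivalently, both `x` and `x̃` are pure). -/
def IsDoublyPure : {n : ℕ} → CD n → Prop
  | 0, x => x = 0
  | _ + 1, x => IsPure x.1 ∧ IsPure x.2

/-- The associator `(x,y,z) = (xy)z - x(yz)`. -/
def assoc {n : ℕ} (x y z : CD n) : CD n := (x * y) * z - x * (y * z)

/-- The subspace `ℍ_a`: the real span of `{e₀, ã, a, ẽ₀}`. -/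
def Ha {n : ℕ} (a : CD n) : Submodule ℝ (CD n) :=
  Submodule.span ℝ {e0 n, tilde a, a, te0 n}

/-- The orthogonal complement `ℍ_a^⊥` of `ℍ_a` in `A n`. -/
def HaPerp {n : ℕ} (a : CD n) : Set (CD n) :=
  {x | ∀ y ∈ Ha a, CD.inner x y = 0}

/-- The element `ε = (ẽ₀, 0)` of `A (n+1)`. -/
def eps (n : ℕ) : CD (n + 1) := (te0 n, 0)

/-- `α̂ = (b,a)` for `α = (a,b) ∈ A (n+1)`. -/
def hat {n : ℕ} (x : CD (n + 1)) : CD (n + 1) := (x.2, x.1)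

/-- The element `(a, b)` of `A (n+1) = A n × A n`. -/
def pair {n : ℕ} (a b : CD n) : CD (n + 1) := (a, b)

end CD

/-- The 8 generating vectors of `𝕆_α ⊆ A (n+1)`. -/
def ovec {n : ℕ} (α : CD (n + 1)) : Fin 8 → CD (n + 1) :=
  ![CD.e0 (n + 1), CD.tilde (CD.eps n), CD.eps n, CD.te0 (n + 1),
    CD.tilde α, α * CD.eps n, CD.tilde (CD.eps n) * α, α]

/-- The subspace `𝕆_α`: the real span of `{e₀, ε̃, ε, ẽ₀, α̃, αε, ε̃α, α}`. -/
def Oa {n : ℕ} (α : CD (n + 1)) : Submodule ℝ (CD (n + 1)) :=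
  Submodule.span ℝ (Set.range (ovec α))

/-! Write `α = (a,b)`. Both sides reduce to the single condition `⟨b, ã⟩ = 0`. For `ℍ_a^⊥` this is
because a doubly pure `b` is automatically orthogonal to `e₀`, `ẽ₀` and (by assumption) to `a`. For
`𝕆_α^⊥`, pairing `α̂ = (b,a)` with the eight generators of `𝕆_α` gives zero by purity, by
`‖a‖ = ‖b‖` and by `⟨a,b⟩ = 0`, except for `αε = (ã, -b̃)`, where it gives `2⟨b, ã⟩`. -/

namespace CD

variable {n : ℕ}

section Pairs

theorem pair_fst_snd (x : CD (n + 1)) : pair x.1 x.2 = x := rfl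

theorem zero_eq_pair : (0 : CD (n + 1)) = pair 0 0 := rfl

theorem e0_succ : e0 (n + 1) = pair (e0 n) 0 := rfl

theorem te0_succ : te0 (n + 1) = pair 0 (e0 n) := rfl

theorem eps_eq_pair : eps n = pair (te0 n) 0 := rfl

theorem neg_pair (a b : CD n) : -pair a b = pair (-a) (-b) := rfl

theorem pair_add_pair (a b c d : CD n) : pair a b + pair c d = pair (a + c) (b + d) := rfl

theorem conj_pair (a b : CD n) : CD.conj (pair a b) = pair (CD.conj a) (-b) := rfl

theorem pair_mul_pair (a b c d : CD n) :
    pair a b * pair c d = pair (a * c - CD.conj d * b) (d * a + b * CD.conj c) := rfl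

theorem tilde_pair (a b : CD n) : tilde (pair a b) = pair (-b) a := rfl

theorem hat_pair (a b : CD n) : hat (pair a b) = pair b a := rfl

theorem inner_pair_pair (a b c d : CD n) :
    CD.inner (pair a b) (pair c d) = CD.inner a c + CD.inner b d := rfl

end Pairs

section Conj

theorem conj_zero : ∀ {n : ℕ}, CD.conj (0 : CD n) = 0
  | 0 => rfl
  | _ + 1 => by rw [zero_eq_pair, conj_pair, conj_zero, neg_zero]

theorem conj_neg : ∀ {n : ℕ} (x : CD n), CD.conj (-x) = -CD.conj x
  | 0, _ => rfl
  | _ + 1, x => by rw [← pair_fst_snd x, neg_pair, conj_pair, conj_pair, conj_neg, neg_pair]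

theorem conj_e0 : ∀ {n : ℕ}, CD.conj (e0 n) = e0 n
  | 0 => rfl
  | _ + 1 => by rw [e0_succ, conj_pair, conj_e0, neg_zero]

theorem conj_te0_succ : CD.conj (te0 (n + 1)) = -te0 (n + 1) := by
  rw [te0_succ, conj_pair, conj_zero, neg_pair, neg_zero]

end Conj

section Mul

theorem zero_mul_and_mul_zero : ∀ {n : ℕ} (x : CD n), 0 * x = 0 ∧ x * 0 = 0
  | 0, x => ⟨zero_mul (show ℝ from x), mul_zero (show ℝ from x)⟩
  | _ + 1, x => by
    rw [← pair_fst_snd x, zero_eq_pair, pair_mul_pair, pair_mul_pair, conj_zero]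
    simp only [zero_mul_and_mul_zero, sub_zero, add_zero, and_self]

protected theorem zero_mul (x : CD n) : 0 * x = 0 := (zero_mul_and_mul_zero x).1

protected theorem mul_zero (x : CD n) : x * 0 = 0 := (zero_mul_and_mul_zero x).2

theorem e0_mul_and_mul_e0 : ∀ {n : ℕ} (x : CD n), e0 n * x = x ∧ x * e0 n = x
  | 0, x => ⟨one_mul (show ℝ from x), mul_one (show ℝ from x)⟩
  | _ + 1, x => by
    rw [← pair_fst_snd x, e0_succ, pair_mul_pair, pair_mul_pair, conj_zero, conj_e0]
    simp only [e0_mul_and_mul_e0, CD.zero_mul, CD.mul_zero, sub_zero, add_zero, zero_add,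
      pair_fst_snd, and_self]

protected theorem e0_mul (x : CD n) : e0 n * x = x := (e0_mul_and_mul_e0 x).1

protected theorem mul_e0 (x : CD n) : x * e0 n = x := (e0_mul_and_mul_e0 x).2

theorem neg_mul_and_mul_neg : ∀ {n : ℕ} (x y : CD n), -x * y = -(x * y) ∧ x * -y = -(x * y)
  | 0, x, y =>
    ⟨neg_mul (show ℝ from x) (show ℝ from y), mul_neg (show ℝ from x) (show ℝ from y)⟩
  | _ + 1, x, y => by
    rw [← pair_fst_snd x, ← pair_fst_snd y, neg_pair, neg_pair, pair_mul_pair, pair_mul_pair,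
      pair_mul_pair, conj_neg, conj_neg]
    simp only [neg_mul_and_mul_neg, neg_pair]
    constructor <;> congr 1 <;> abel

protected theorem neg_mul (x y : CD n) : -x * y = -(x * y) := (neg_mul_and_mul_neg x y).1

protected theorem mul_neg (x y : CD n) : x * -y = -(x * y) := (neg_mul_and_mul_neg x y).2

theorem mul_te0 (x : CD (n + 1)) : x * te0 (n + 1) = tilde x := by
  rw [← pair_fst_snd x, te0_succ, pair_mul_pair, conj_e0, conj_zero, CD.mul_zero, CD.mul_zero,
    CD.e0_mul, CD.e0_mul, zero_sub, add_zero, tilde_pair]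

end Mul

section Inner

theorem inner_add_right : ∀ {n : ℕ} (x y z : CD n),
    CD.inner x (y + z) = CD.inner x y + CD.inner x z
  | 0, x, y, z => mul_add (show ℝ from x) (show ℝ from y) (show ℝ from z)
  | _ + 1, x, y, z => by
    rw [← pair_fst_snd x, ← pair_fst_snd y, ← pair_fst_snd z, pair_add_pair, inner_pair_pair,
      inner_pair_pair, inner_pair_pair, inner_add_right, inner_add_right]
    ring

theorem inner_smul_right : ∀ {n : ℕ} (c : ℝ) (x y : CD n),
    CD.inner x (c • y) = c * CD.inner x y
  | 0, c, x, y => mul_left_comm (show ℝ from x) c (show ℝ from y)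
  | _ + 1, c, x, y => by
    change CD.inner x.1 (c • y.1) + CD.inner x.2 (c • y.2) =
      c * (CD.inner x.1 y.1 + CD.inner x.2 y.2)
    rw [inner_smul_right, inner_smul_right, mul_add]

theorem inner_comm : ∀ {n : ℕ} (x y : CD n), CD.inner x y = CD.inner y x
  | 0, x, y => mul_comm (show ℝ from x) (show ℝ from y)
  | _ + 1, x, y => by
    rw [← pair_fst_snd x, ← pair_fst_snd y, inner_pair_pair, inner_pair_pair, inner_comm x.1,
      inner_comm x.2]

def innerₗ (x : CD n) : CD n →ₗ[ℝ] ℝ where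
  toFun := CD.inner x
  map_add' := inner_add_right x
  map_smul' c y := inner_smul_right c x y

theorem inner_zero_right (x : CD n) : CD.inner x 0 = 0 := (innerₗ x).map_zero

theorem inner_neg_right (x y : CD n) : CD.inner x (-y) = -CD.inner x y := (innerₗ x).map_neg y

theorem forall_mem_span_inner_eq_zero_iff (x : CD n) (s : Set (CD n)) :
    (∀ y ∈ Submodule.span ℝ s, CD.inner x y = 0) ↔ ∀ y ∈ s, CD.inner x y = 0 :=
  Submodule.span_le (p := LinearMap.ker (innerₗ x))

theorem inner_tilde_self (x : CD (n + 1)) : CD.inner x (tilde x) = 0 := by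
  rw [← pair_fst_snd x, tilde_pair, inner_pair_pair, inner_neg_right, inner_comm x.1]
  ring

theorem inner_tilde_comm (x y : CD (n + 1)) : CD.inner x (tilde y) = -CD.inner y (tilde x) := by
  rw [← pair_fst_snd x, ← pair_fst_snd y, tilde_pair, tilde_pair, inner_pair_pair,
    inner_pair_pair, inner_neg_right, inner_neg_right, inner_comm x.1, inner_comm x.2]
  ring

end Inner

section Pure

variable {x : CD n}

theorem IsPure.conj_eq (h : IsPure x) : CD.conj x = -x := eq_neg_of_add_eq_zero_right h

theorem IsDoublyPure.isPure {x : CD (n + 1)} (h : IsDoublyPure x) : IsPure x := by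
  rw [IsPure, ← pair_fst_snd x, conj_pair, pair_add_pair, h.1, add_neg_cancel, zero_eq_pair]

theorem IsPure.inner_e0 : ∀ {n : ℕ} {x : CD n}, IsPure x → CD.inner x (e0 n) = 0
  | 0, x, h => by
    change (show ℝ from x) + (show ℝ from x) = 0 at h
    change (show ℝ from x) * 1 = 0
    linarith
  | _ + 1, x, h => by
    have h₁ : IsPure x.1 := congrArg Prod.fst h
    rw [← pair_fst_snd x, e0_succ, inner_pair_pair, h₁.inner_e0, inner_zero_right, add_zero]

theorem IsDoublyPure.inner_te0 {x : CD (n + 1)} (h : IsDoublyPure x) :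
    CD.inner x (te0 (n + 1)) = 0 := by
  rw [← pair_fst_snd x, te0_succ, inner_pair_pair, inner_zero_right, h.2.inner_e0, zero_add]

theorem IsDoublyPure.te0_mul {x : CD (n + 1)} (h : IsDoublyPure x) :
    te0 (n + 1) * x = -tilde x := by
  rw [← pair_fst_snd x, te0_succ, pair_mul_pair, h.1.conj_eq, h.2.conj_eq, CD.zero_mul,
    CD.neg_mul, CD.mul_e0, CD.e0_mul, CD.mul_zero, zero_sub, neg_neg, zero_add, tilde_pair,
    neg_pair, neg_neg]

end Pure

theorem pair_mul_eps (a b : CD (n + 1)) :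
    pair a b * eps (n + 1) = pair (tilde a) (-tilde b) := by
  rw [eps_eq_pair, pair_mul_pair, conj_zero, CD.zero_mul, CD.zero_mul, mul_te0, conj_te0_succ,
    CD.mul_neg, mul_te0, sub_zero, zero_add]

theorem tilde_eps_mul_pair {a b : CD (n + 1)} (ha : IsDoublyPure a) (hb : IsPure b) :
    tilde (eps (n + 1)) * pair a b = pair (tilde b) (tilde a) := by
  rw [eps_eq_pair, tilde_pair, neg_zero, pair_mul_pair, CD.zero_mul, CD.mul_zero, hb.conj_eq,
    ha.isPure.conj_eq, CD.neg_mul, mul_te0, CD.mul_neg, ha.te0_mul, neg_neg, zero_sub, neg_neg,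
    zero_add]

theorem mem_HaPerp_iff {a b : CD (n + 1)} (hb : IsDoublyPure b) (hba : CD.inner b a = 0) :
    b ∈ HaPerp a ↔ CD.inner b (tilde a) = 0 := by
  simp only [HaPerp, Ha, Set.mem_ofPred_eq, forall_mem_span_inner_eq_zero_iff,
    Set.forall_mem_insert, Set.mem_singleton_iff, forall_eq, hb.isPure.inner_e0, hba,
    hb.inner_te0, true_and, and_true]

theorem forall_mem_Oa_inner_hat_iff {a b : CD (n + 1)} (ha : IsDoublyPure a)
    (hb : IsDoublyPure b) (hnorm : CD.inner a a = CD.inner b b) (hab : CD.inner a b = 0) :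
    (∀ y ∈ Oa (pair a b), CD.inner (hat (pair a b)) y = 0) ↔ CD.inner b (tilde a) = 0 := by
  have inner_mul_eps : CD.inner (pair b a) (pair a b * eps (n + 1)) = 2 * CD.inner b (tilde a) := by
    rw [pair_mul_eps, inner_pair_pair, inner_neg_right, inner_tilde_comm a b]
    ring
  simp only [Oa, forall_mem_span_inner_eq_zero_iff, Set.forall_mem_range, hat_pair]
  constructor
  · intro h
    have h₅ := h 5
    simp only [ovec, Matrix.cons_val, inner_mul_eps] at h₅
    linarith
  · intro h i
    fin_cases i <;> simp only [ovec, Matrix.cons_val, Fin.reduceFinMk]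
    · rw [e0_succ, inner_pair_pair, hb.isPure.inner_e0, inner_zero_right, add_zero]
    · rw [eps_eq_pair, tilde_pair, neg_zero, inner_pair_pair, inner_zero_right, ha.inner_te0,
        add_zero]
    · rw [eps_eq_pair, inner_pair_pair, hb.inner_te0, inner_zero_right, add_zero]
    · rw [te0_succ, inner_pair_pair, inner_zero_right, ha.isPure.inner_e0, add_zero]
    · rw [tilde_pair, inner_pair_pair, inner_neg_right, hnorm, neg_add_cancel]
    · rw [inner_mul_eps, h, mul_zero]
    · rw [tilde_eps_mul_pair ha hb.isPure, inner_pair_pair, inner_tilde_self, inner_tilde_self,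
        add_zero]
    · rw [inner_pair_pair, inner_comm, hab, add_zero]

end CD

/-- For `n ≥ 3` and `α = (a,b) ∈ V_{2^n-2,2}`, with `α̂ = (b,a)`:
`α ∈ W_{2^{n-1}-1,2}` (i.e. `b ∈ ℍ_a^⊥`) if and only if `α̂ ∈ 𝕆_α^⊥`. -/
theorem statement12 (n : ℕ) (hn : 3 ≤ n) (a b : CD n)
    (ha : CD.IsDoublyPure a) (hb : CD.IsDoublyPure b)
    (hna : CD.norm a = 1) (hnb : CD.norm b = 1) (hab : CD.inner a b = 0) :
    b ∈ CD.HaPerp a ↔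
      ∀ y ∈ Oa (CD.pair a b), CD.inner (CD.hat ((CD.pair a b))) y = 0 := by
  obtain ⟨m, rfl⟩ : ∃ m, n = m + 1 := ⟨n - 1, by omega⟩
  have hnorm : CD.inner a a = CD.inner b b := by
    rw [Real.sqrt_eq_one.mp hna, Real.sqrt_eq_one.mp hnb]
  have hba : CD.inner b a = 0 := by rwa [CD.inner_comm]
  rw [CD.mem_HaPerp_iff hb hba, CD.forall_mem_Oa_inner_hat_iff ha hb hnorm hab]
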